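/- arXiv:1803.04218 — 2 statements merged into one kernel-verified Lean document; each statement's English description precedes it below -/
import Mathlib

section
/- Under the assumptions of the attainment lemma (X second countable locally compact Hausdorff, H separable RKHS with unit-norm kernel, H ∩ C₀(X) dense in H), the dual norm of the atomic norm equals the supremum norm: for every g ∈ H, sup{|⟨g,f⟩| : f ∈ H, ‖f‖_A ≤ 1} = sup_{x∈X} |g(x)|. -/
open MeasureTheory

/-- Representing-measure encoding of the atomic norm; see STATEMENT 3. -/
noncomputable def atomSet {X : Type*} [TopologicalSpace X] [MeasurableSpace X]
    {H : Type*} [NormedAddCommGroup H] [InnerProductSpace ℂ H] [CompleteSpace H]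
    (k : X → H) (f : H) : Set ℝ :=
  {r | ∃ (ν : Measure X) (h : X → ℂ), IsFiniteMeasure ν ∧ ν.Regular ∧
      (∀ x, ‖h x‖ = 1) ∧ Integrable (fun x => h x • k x) ν ∧
      (∫ x, h x • k x ∂ν) = f ∧ r = (ν Set.univ).toReal}

/-- The dual norm of the atomic norm is the supremum norm. Under the assumptions
of the attainment lemma, for every `g ∈ H`,
`sup{|⟪g,f⟫| : f ∈ H, ‖f‖_A ≤ 1} = sup_{x ∈ X} |g(x)|`, where `g(x) = ⟪k x, g⟫` and a finite
atomic norm `‖f‖_A ≤ 1` is expressed by the existence of a representing measure together with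
`sInf (atomSet k f) ≤ 1`. -/
theorem stmt4 {X : Type*} [TopologicalSpace X] [T2Space X] [LocallyCompactSpace X]
    [SecondCountableTopology X] [MeasurableSpace X] [BorelSpace X]
    {H : Type*} [NormedAddCommGroup H] [InnerProductSpace ℂ H] [CompleteSpace H]
    [TopologicalSpace.SeparableSpace H]
    (k : X → H) (hk : ∀ x : X, ‖k x‖ = 1)
    (hdense : Dense {g : H | ∃ gg : ZeroAtInftyContinuousMap X ℂ,
        ∀ x : X, gg x = (inner ℂ (k x) g : ℂ)})
    (g : H) :
    sSup {r : ℝ | ∃ f : H, (atomSet k f).Nonempty ∧ sInf (atomSet k f) ≤ 1 ∧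
        r = ‖(inner ℂ g f : ℂ)‖}
      = ⨆ x : X, ‖(inner ℂ (k x) g : ℂ)‖ := by
  classical
  set C : ℝ := ⨆ x : X, ‖(inner ℂ (k x) g : ℂ)‖ with hC
  set S : Set ℝ := {r : ℝ | ∃ f : H, (atomSet k f).Nonempty ∧ sInf (atomSet k f) ≤ 1 ∧
        r = ‖(inner ℂ g f : ℂ)‖} with hS
  have hbdd : BddAbove (Set.range fun x : X => ‖(inner ℂ (k x) g : ℂ)‖) := by
    refine ⟨‖g‖, ?_⟩
    rintro _ ⟨x, rfl⟩
    calc ‖(inner ℂ (k x) g : ℂ)‖ ≤ ‖k x‖ * ‖g‖ := norm_inner_le_norm _ _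
      _ = ‖g‖ := by rw [hk x, one_mul]
  have hC0 : 0 ≤ C := Real.iSup_nonneg fun x => norm_nonneg _
  -- every atomSet is a set of nonnegative reals
  have hatom_nonneg : ∀ (f : H) (r : ℝ), r ∈ atomSet k f → 0 ≤ r := by
    rintro f r ⟨ν, h, hfin, hreg, hh, hint, hf, hr⟩
    rw [hr]; exact ENNReal.toReal_nonneg
  -- key bound on the pairing
  have key : ∀ (f : H) (r : ℝ), r ∈ atomSet k f → ‖(inner ℂ g f : ℂ)‖ ≤ C * r := by
    rintro f r ⟨ν, h, hfin, hreg, hh, hint, hf, hr⟩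
    haveI := hfin
    have h1 : (inner ℂ g f : ℂ) = ∫ x, (inner ℂ g (h x • k x) : ℂ) ∂ν := by
      rw [← hf, integral_inner hint g]
    rw [h1, hr]
    refine norm_integral_le_of_norm_le_const (Filter.Eventually.of_forall fun x => ?_)
    have : ‖(inner ℂ g (h x • k x) : ℂ)‖ = ‖(inner ℂ (k x) g : ℂ)‖ := by
      rw [inner_smul_right, norm_mul, hh x, one_mul, norm_inner_symm]
    rw [this]
    exact le_ciSup hbdd x
  -- 0 belongs to S (via f = 0 and the zero measure)
  have h0atom : (0 : ℝ) ∈ atomSet k 0 := by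
    refine ⟨0, fun _ => 1, inferInstance, inferInstance, fun x => by simp, ?_, ?_, by simp⟩
    · exact integrable_zero_measure
    · simp
  have hS0 : (0 : ℝ) ∈ S := by
    refine ⟨0, ⟨0, h0atom⟩, ?_, by simp⟩
    exact le_trans (csInf_le ⟨0, fun r hr => hatom_nonneg _ r hr⟩ h0atom) (by norm_num)
  -- C is an upper bound for S
  have hub : ∀ r ∈ S, r ≤ C := by
    rintro r ⟨f, ⟨r₀, hr₀⟩, hinf, rfl⟩
    rcases eq_or_lt_of_le hC0 with hCz | hCpos
    · have := key f r₀ hr₀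
      rw [← hCz, zero_mul] at this
      exact this.trans hC0
    · have hdiv : ‖(inner ℂ g f : ℂ)‖ / C ≤ sInf (atomSet k f) := by
        refine le_csInf ⟨r₀, hr₀⟩ fun r hr => ?_
        rw [div_le_iff₀ hCpos]
        calc ‖(inner ℂ g f : ℂ)‖ ≤ C * r := key f r hr
          _ = r * C := mul_comm _ _
      have : ‖(inner ℂ g f : ℂ)‖ / C ≤ 1 := hdiv.trans hinf
      calc ‖(inner ℂ g f : ℂ)‖ = ‖(inner ℂ g f : ℂ)‖ / C * C := by
            field_simp
        _ ≤ 1 * C := by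
            exact mul_le_mul_of_nonneg_right this hC0
        _ = C := one_mul C
  have hSbdd : BddAbove S := ⟨C, hub⟩
  apply le_antisymm
  · exact csSup_le ⟨0, hS0⟩ hub
  · refine Real.iSup_le (fun x => le_csSup hSbdd ?_) (le_csSup hSbdd hS0)
    -- ‖⟪k x, g⟫‖ ∈ S via f = k x and the Dirac measure at x
    have hdirac : (1 : ℝ) ∈ atomSet k (k x) := by
      have hae : (fun y => (1 : ℂ) • k y) =ᵐ[Measure.dirac x] (fun _ => (1 : ℂ) • k x) := by
        rw [Filter.EventuallyEq, ae_dirac_eq]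
        simp
      refine ⟨Measure.dirac x, fun _ => 1, inferInstance, inferInstance,
        fun y => by simp, ?_, ?_, by simp⟩
      · exact (integrable_const ((1 : ℂ) • k x)).congr hae.symm
      · rw [integral_congr_ae hae]
        simp
    refine ⟨k x, ⟨1, hdirac⟩, ?_, ?_⟩
    · exact csInf_le ⟨0, fun r hr => hatom_nonneg _ r hr⟩ hdirac
    · rw [norm_inner_symm]
end

section
/- Under the dual certificate hypotheses (ψ ∈ H ∩ C₀(X), ‖ψ‖_∞ = 1, ψ(x_j) = c_j/|c_j|, |ψ| < 1 off {x_j}), if μ is any complex measure with K*μ = K*μ₀ where μ₀ = Σ_{n=1}^s c_n δ_{x_n}, and ‖μ‖_TV ≤ ‖μ₀‖_TV, then supp(μ) ⊆ {x_1,…,x_s}; if in addition (K_{x_n}) are linearly independent then μ = μ₀. -/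
open MeasureTheory
open scoped Classical

/-- Support identification under the dual certificate hypotheses. Let
`μ₀ = Σ_{n=1}^s c_n δ_{x_n}` (nonzero coefficients, distinct points) and suppose
`ψ ∈ H ∩ C₀(X)` satisfies `‖ψ‖_∞ = 1`, `ψ(x_j) = c_j/|c_j|`, and `|ψ| < 1` off `{x_j}`.
If `μ` is a complex measure (encoded by its polar decomposition: finite regular `ν = |μ|`
and unimodular density `h`) with `K*μ = K*μ₀` and `‖μ‖_TV ≤ ‖μ₀‖_TV = Σ|c_n|`, then
`supp(μ) ⊆ {x_1,…,x_s}`; if moreover the kernel functions `(K_{x_n})` are linearly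
independent then `μ = μ₀` (i.e. `μ(A) = Σ_{x_n ∈ A} c_n` for every Borel set `A`). -/
theorem stmt12 {X : Type*} [MetricSpace X] [LocallyCompactSpace X]
    [SecondCountableTopology X] [MeasurableSpace X] [BorelSpace X]
    {H : Type*} [NormedAddCommGroup H] [InnerProductSpace ℂ H] [CompleteSpace H]
    [TopologicalSpace.SeparableSpace H]
    (k : X → H) (hk : ∀ x : X, ‖k x‖ = 1)
    (hdense : Dense {g : H | ∃ gg : ZeroAtInftyContinuousMap X ℂ,
        ∀ x : X, gg x = (inner ℂ (k x) g : ℂ)})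
    (s : ℕ) (c : Fin s → ℂ) (x : Fin s → X)
    (hc : ∀ n, c n ≠ 0) (hx : Function.Injective x)
    (ψ : H) (ψ₀ : ZeroAtInftyContinuousMap X ℂ)
    (hψ₀ : ∀ x' : X, ψ₀ x' = (inner ℂ (k x') ψ : ℂ))
    (hbound : ∀ x' : X, ‖ψ₀ x'‖ ≤ 1)
    (hsign : ∀ n, ψ₀ (x n) = c n / (‖c n‖ : ℂ))
    (hstrict : ∀ x' : X, x' ∉ Set.range x → ‖ψ₀ x'‖ < 1)
    (ν : Measure X) [IsFiniteMeasure ν] (hreg : ν.Regular)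
    (h : X → ℂ) (hh : ∀ x' : X, ‖h x'‖ = 1)
    (hint : Integrable (fun x' => h x' • k x') ν)
    (heq : (∫ x', h x' • k x' ∂ν) = ∑ n, c n • k (x n))
    (hTV : (ν Set.univ).toReal ≤ ∑ n, ‖c n‖) :
    ν (Set.range x)ᶜ = 0 ∧
    (LinearIndependent ℂ (fun n => k (x n)) →
      ∀ A : Set X, MeasurableSet A →
        (∫ x' in A, h x' ∂ν) = ∑ n ∈ Finset.univ.filter (fun n => x n ∈ A), c n) := by
  classical
  set f : X → ℂ := fun x' => (innerSL ℂ ψ) (h x' • k x') with hfdef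
  have hfval : ∀ x', f x' = h x' * (starRingEnd ℂ) (ψ₀ x') := by
    intro x'
    simp only [hfdef, innerSL_apply_apply, inner_smul_right]
    rw [hψ₀, inner_conj_symm]
  have hf_int : Integrable f ν := (innerSL ℂ ψ).integrable_comp hint
  have hfnormle : ∀ x', ‖f x'‖ ≤ ‖ψ₀ x'‖ := by
    intro x'
    rw [hfval, norm_mul, hh, one_mul, RCLike.norm_conj]
  -- the key integral identity
  have hF : ∫ x', f x' ∂ν = ((∑ n, ‖c n‖ : ℝ) : ℂ) := by
    have h1 : ∫ x', f x' ∂ν = (innerSL ℂ ψ) (∑ n, c n • k (x n)) := by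
      rw [← heq]; exact (innerSL ℂ ψ).integral_comp_comm hint
    rw [h1, map_sum, Complex.ofReal_sum]
    refine Finset.sum_congr rfl fun n _ => ?_
    have hcn : (‖c n‖ : ℂ) ≠ 0 := by
      simpa using norm_ne_zero_iff.mpr (hc n)
    have h2 : (innerSL ℂ ψ) (c n • k (x n)) = c n * (starRingEnd ℂ) (ψ₀ (x n)) := by
      simp only [innerSL_apply_apply, inner_smul_right]
      rw [hψ₀, inner_conj_symm]
    rw [h2, hsign n, map_div₀, Complex.conj_ofReal, ← mul_div_assoc, Complex.mul_conj,
      Complex.normSq_eq_norm_sq, div_eq_iff hcn]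
    push_cast
    ring
  -- real-part argument
  set g : X → ℝ := fun x' => 1 - RCLike.re (f x') with hgdef
  have hg_nonneg : ∀ x', 0 ≤ g x' := by
    intro x'
    have h1 : RCLike.re (f x') ≤ ‖f x'‖ :=
      le_trans (le_abs_self _) (RCLike.abs_re_le_norm _)
    have h2 := le_trans (hfnormle x') (hbound x')
    simp only [hgdef]; linarith
  have hg_int : Integrable g ν := (integrable_const 1).sub hf_int.re
  have hg0 : ∫ x', g x' ∂ν = 0 := by
    have h1 : ∫ x', g x' ∂ν = (ν Set.univ).toReal - ∑ n, ‖c n‖ := by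
      rw [hgdef]
      rw [integral_sub (integrable_const 1) hf_int.re, integral_re hf_int, hF, integral_const]
      simp
      rfl
    have h2 : 0 ≤ ∫ x', g x' ∂ν := integral_nonneg hg_nonneg
    linarith
  have hgae : g =ᵐ[ν] 0 :=
    (integral_eq_zero_iff_of_nonneg hg_nonneg hg_int).mp hg0
  have hmem : ∀ᵐ x' ∂ν, x' ∈ Set.range x := by
    filter_upwards [hgae] with x' hx'
    by_contra hmemc
    have h1 : RCLike.re (f x') = 1 := by
      have : g x' = 0 := hx'
      simp only [hgdef] at this; linarith
    have h2 : RCLike.re (f x') ≤ ‖f x'‖ :=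
      le_trans (le_abs_self _) (RCLike.abs_re_le_norm _)
    have h3 := lt_of_le_of_lt (hfnormle x') (hstrict x' hmemc)
    linarith
  have part1 : ν (Set.range x)ᶜ = 0 := by
    have := hmem
    rw [ae_iff] at this
    simpa [Set.compl_def] using this
  refine ⟨part1, fun hli A hA => ?_⟩
  set S : Finset X := Finset.univ.image x with hSdef
  have hScoe : (S : Set X) = Set.range x := by simp [hSdef]
  have hrestrict : ν.restrict (S : Set X) = ν :=
    Measure.restrict_eq_self_of_ae_mem (by rw [hScoe]; exact hmem)
  -- measurability of h
  set g2 : X → ℂ := fun y => ∑ n, Set.indicator {x n} (fun _ => h (x n)) y with hg2def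
  have hg2m : Measurable g2 := by
    apply Finset.measurable_sum
    intro n _
    exact Measurable.indicator measurable_const (measurableSet_singleton _)
  have hae : h =ᵐ[ν] g2 := by
    filter_upwards [hmem] with y hy
    obtain ⟨m, rfl⟩ := hy
    have e1 : (∑ n, Set.indicator ({x n} : Set X) (fun _ => h (x n)) (x m)) = h (x m) := by
      rw [Finset.sum_eq_single m]
      · exact Set.indicator_of_mem rfl _
      · intro n _ hnm
        exact Set.indicator_of_notMem
          (fun hxy => hnm (hx (Set.mem_singleton_iff.mp hxy)).symm) _
      · intro hm; exact absurd (Finset.mem_univ m) hm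
    exact e1.symm
  have hhm : AEStronglyMeasurable h ν :=
    hg2m.aestronglyMeasurable.congr hae.symm
  have hh_int : Integrable h ν :=
    Integrable.mono' (integrable_const 1) hhm (Filter.Eventually.of_forall fun y => (hh y).le)
  -- identify the coefficients
  have h2 : ∫ x' in (S : Set X), h x' • k x' ∂ν = ∑ n, c n • k (x n) := by
    rw [hrestrict]; exact heq
  rw [setIntegral_finset _ hint.integrableOn] at h2
  rw [hSdef, Finset.sum_image (fun a _ b _ hab => hx hab)] at h2
  have hsum : ∑ n, (((ν {x n}).toReal : ℂ) * h (x n)) • k (x n) = ∑ n, c n • k (x n) := by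
    rw [← h2]
    refine Finset.sum_congr rfl fun n _ => ?_
    rw [← smul_assoc, Complex.real_smul, measureReal_def]
  have hcoef : ∀ n, ((ν {x n}).toReal : ℂ) * h (x n) = c n := by
    have hz : ∑ n, ((((ν {x n}).toReal : ℂ) * h (x n)) - c n) • k (x n) = 0 := by
      simp only [sub_smul, Finset.sum_sub_distrib, hsum, sub_self]
    intro n
    exact sub_eq_zero.mp (Fintype.linearIndependent_iff.mp hli _ hz n)
  -- compute the integral over A
  have hT : ν.restrict A = ν.restrict (↑(S.filter (· ∈ A)) : Set X) := by
    conv_lhs => rw [← hrestrict]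
    rw [Measure.restrict_restrict hA]
    congr 1
    ext y
    simp [and_comm]
  rw [hT, setIntegral_finset _ hh_int.integrableOn]
  rw [hSdef, Finset.filter_image, Finset.sum_image (fun a _ b _ hab => hx hab)]
  refine Finset.sum_congr rfl fun n _ => ?_
  rw [Complex.real_smul, measureReal_def, hcoef n]
end
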